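/- Complex conjugation of reversal: for a primitive m-th root of unity ζ_m, positive integers k_1,...,k_r and roots of unity η_1,...,η_r of modulus 1, the complex conjugate of z_m((η_1,...,η_r);(k_1,...,k_r);ζ_m) equals (-ζ_m)^{-(k_1+...+k_r)} (η_1···η_r)^{-m} · z_m((η_r,...,η_1);(k_r,...,k_1);ζ_m), where z_m is the multiple harmonic sum Σ_{m>m_1>...>m_r>0} Π_j η_j^{m_j}((1-ζ_m)/(1-ζ_m^{m_j}))^{k_j}. -/

import Mathlib

/-!
Substituting `m_j ↦ m - m_{r+1-j}` is an involution of the strictly decreasing tuples in `(0, m)`,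
and it matches the two sums term by term: for `‖ζ‖ = 1` and `ζ ^ m = 1` one has
`conj (ζ ^ n) = ζ ^ (m - n)` and `1 - ζ⁻¹ = (-ζ)⁻¹ (1 - ζ)`, so conjugating
`(1 - ζ) / (1 - ζ ^ n)` gives `(-ζ)⁻¹ (1 - ζ) / (1 - ζ ^ (m - n))`, while
`conj (η ^ n) = (η ^ m)⁻¹ η ^ (m - n)`.
-/

open Finset

/-- The finset of strictly decreasing tuples `m > f 0 > f 1 > ... > f (r-1) > 0`. -/
def decFull (m r : ℕ) : Finset (Fin r → ℕ) :=
  (Fintype.piFinset fun _ : Fin r => Finset.Ioo 0 m).filter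
    fun f => ∀ i j : Fin r, i < j → f j < f i

open ComplexConjugate

theorem Complex.conj_pow_eq_inv_pow_mul_pow_sub {η : ℂ} (hη : ‖η‖ = 1) {m n : ℕ}
    (hnm : n ≤ m) :
    conj (η ^ n) = (η ^ m)⁻¹ * η ^ (m - n) := by
  have hη0 : η ≠ 0 := norm_ne_zero_iff.mp (by rw [hη]; exact one_ne_zero)
  rw [map_pow, ← Complex.inv_eq_conj hη, pow_sub₀ _ hη0 hnm, inv_pow]
  field_simp

theorem one_sub_inv_eq_neg_inv_mul {K : Type*} [Field K] {x : K} (hx : x ≠ 0) :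
    1 - x⁻¹ = (-x)⁻¹ * (1 - x) := by
  field_simp; ring

theorem Complex.conj_one_sub_div_one_sub_pow {ζ : ℂ} {m n : ℕ} (hζ : ζ ^ m = 1)
    (hnm : n < m) :
    conj ((1 - ζ) / (1 - ζ ^ n)) = (-ζ)⁻¹ * ((1 - ζ) / (1 - ζ ^ (m - n))) := by
  have hζ1 : ‖ζ‖ = 1 := Complex.norm_eq_one_of_pow_eq_one hζ (by omega)
  have hζ0 : ζ ≠ 0 := norm_ne_zero_iff.mp (by rw [hζ1]; exact one_ne_zero)
  rw [map_div₀, map_sub, map_sub, map_one, Complex.conj_pow_eq_inv_pow_mul_pow_sub hζ1 hnm.le,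
    hζ, inv_one, one_mul, ← Complex.inv_eq_conj hζ1, one_sub_inv_eq_neg_inv_mul hζ0,
    mul_div_assoc]

theorem Complex.conj_pow_mul_div_one_sub_pow_pow {ζ η : ℂ} {m n : ℕ} (hζ : ζ ^ m = 1)
    (hη : ‖η‖ = 1) (hnm : n < m) (k : ℕ) :
    conj (η ^ n * ((1 - ζ) / (1 - ζ ^ n)) ^ k) =
      ((-ζ) ^ k)⁻¹ * (η ^ m)⁻¹ * (η ^ (m - n) * ((1 - ζ) / (1 - ζ ^ (m - n))) ^ k) := by
  rw [map_mul, Complex.conj_pow_eq_inv_pow_mul_pow_sub hη hnm.le, map_pow,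
    Complex.conj_one_sub_div_one_sub_pow hζ hnm, mul_pow, inv_pow]
  ring

theorem mem_decFull {m r : ℕ} {f : Fin r → ℕ} :
    f ∈ decFull m r ↔
      (∀ a, 0 < f a ∧ f a < m) ∧ ∀ i j : Fin r, i < j → f j < f i := by
  simp [decFull, Fintype.mem_piFinset]

theorem reflect_mem_decFull {m r : ℕ} {f : Fin r → ℕ} (hf : f ∈ decFull m r) :
    (fun a => m - f a.rev) ∈ decFull m r := by
  obtain ⟨hbd, hdec⟩ := mem_decFull.mp hf
  refine mem_decFull.mpr ⟨fun a => ?_, fun i j hij => ?_⟩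
  · have := hbd a.rev
    omega
  · have := hdec _ _ (Fin.rev_lt_rev.mpr hij)
    have := hbd i.rev
    omega

theorem reflect_reflect_of_mem_decFull {m r : ℕ} {f : Fin r → ℕ} (hf : f ∈ decFull m r) :
    (fun a => m - (m - f a.rev.rev)) = f := by
  funext a
  have := ((mem_decFull.mp hf).1 a).2
  simp only [Fin.rev_rev]
  omega

theorem stmt13_general (m r : ℕ) (ζ : ℂ) (hζ : IsPrimitiveRoot ζ m)
    (k : Fin r → ℕ)
    (η : Fin r → ℂ) (hη : ∀ i, ‖η i‖ = 1) :
    (starRingEnd ℂ)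
        (∑ f ∈ decFull m r, ∏ a : Fin r,
          η a ^ f a * ((1 - ζ) / (1 - ζ ^ f a)) ^ k a) =
      ((-ζ) ^ (∑ a : Fin r, k a))⁻¹ * ((∏ a : Fin r, η a) ^ m)⁻¹ *
        ∑ f ∈ decFull m r, ∏ a : Fin r,
          η (Fin.rev a) ^ f a * ((1 - ζ) / (1 - ζ ^ f a)) ^ k (Fin.rev a) := by
  rw [map_sum, mul_sum]
  refine sum_nbij' (fun f a => m - f a.rev) (fun f a => m - f a.rev)
    (fun f hf => reflect_mem_decFull hf) (fun f hf => reflect_mem_decFull hf)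
    (fun f hf => reflect_reflect_of_mem_decFull hf)
    (fun f hf => reflect_reflect_of_mem_decFull hf) fun f hf => ?_
  have hbd := (mem_decFull.mp hf).1
  calc conj (∏ a, η a ^ f a * ((1 - ζ) / (1 - ζ ^ f a)) ^ k a)
      = ∏ a, ((-ζ) ^ k a)⁻¹ * (η a ^ m)⁻¹ *
          (η a ^ (m - f a) * ((1 - ζ) / (1 - ζ ^ (m - f a))) ^ k a) := by
        rw [map_prod]
        exact prod_congr rfl fun a _ =>
          Complex.conj_pow_mul_div_one_sub_pow_pow hζ.pow_eq_one (hη a) (hbd a).2 (k a)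
    _ = ((-ζ) ^ ∑ a, k a)⁻¹ * ((∏ a, η a) ^ m)⁻¹ *
          ∏ a, η a ^ (m - f a) * ((1 - ζ) / (1 - ζ ^ (m - f a))) ^ k a := by
        rw [prod_mul_distrib, prod_mul_distrib, prod_inv_distrib, prod_inv_distrib,
          prod_pow_eq_pow_sum, prod_pow]
    _ = _ := by
        congr 1
        exact (Equiv.prod_comp Fin.revPerm _).symm

/-- Complex conjugation of reversal: for a primitive `m`-th root of unity `ζ`,
`conj z_m((η_1,…,η_r);(k_1,…,k_r);ζ)
  = (-ζ)^{-(k_1+⋯+k_r)} (η_1⋯η_r)^{-m} z_m((η_r,…,η_1);(k_r,…,k_1);ζ)`. -/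
theorem stmt13 (m r : ℕ) (hm : 0 < m) (ζ : ℂ) (hζ : IsPrimitiveRoot ζ m)
    (k : Fin r → ℕ) (hk : ∀ i, 0 < k i)
    (η : Fin r → ℂ) (hη : ∀ i, ‖η i‖ = 1) :
    (starRingEnd ℂ)
        (∑ f ∈ decFull m r, ∏ a : Fin r,
          η a ^ f a * ((1 - ζ) / (1 - ζ ^ f a)) ^ k a) =
      ((-ζ) ^ (∑ a : Fin r, k a))⁻¹ * ((∏ a : Fin r, η a) ^ m)⁻¹ *
        ∑ f ∈ decFull m r, ∏ a : Fin r,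
          η (Fin.rev a) ^ f a * ((1 - ζ) / (1 - ζ ^ f a)) ^ k (Fin.rev a) :=
  stmt13_general m r ζ hζ k η hη
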